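/- With the setting of the penalised equation: if 0 < ρ ≤ κ, f ∈ V*, φ ∈ H, and u_ρ, u_κ solve Au_ρ + (1/ρ)σ_ρ(u_ρ − Φ(φ)) = f and Au_κ + (1/κ)σ_κ(u_κ − Φ(φ)) = f respectively, then u_ρ ≤ u_κ a.e. -/

import Mathlib

open MeasureTheory

noncomputable def sig (ρ r : ℝ) : ℝ :=
  if r ≤ 0 then 0 else if r < ρ then r ^ 2 / (2 * ρ) else r - ρ / 2

/-!
Test the difference of the two equations with `w = (u_ρ - u_κ)⁺`, which in `V` is
`u + pos (-u)` for `u = u_ρ - u_κ`. Where `w > 0` we have `u_ρ > u_κ`, so monotonicity of `σ_ρ`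
and `σ_κ / κ ≤ σ_ρ / ρ` make the penalty contribution nonpositive, giving `A u w ≤ 0`.
T-monotonicity applied to `-u` gives `A (pos (-u)) w ≤ 0`; adding, `A w w ≤ 0`, and coercivity
forces `w = 0`.
-/

lemma sig_nonneg (ρ r : ℝ) : 0 ≤ sig ρ r := by
  unfold sig
  split_ifs
  · rfl
  · have : 0 < ρ := by linarith
    positivity
  · linarith

lemma sig_monotone (ρ : ℝ) : Monotone (sig ρ) := by
  intro a b hab
  rcases le_or_gt a 0 with ha | ha
  · rw [sig, if_pos ha]
    exact sig_nonneg ρ b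
  unfold sig
  split_ifs <;> first
    | linarith
    | (gcongr; linarith)
    | (have : 0 < ρ := by linarith
       rw [div_le_iff₀ (by positivity)]; nlinarith)

lemma abs_sig_le {ρ : ℝ} (hρ : 0 ≤ ρ) (r : ℝ) : |sig ρ r| ≤ |r| := by
  rw [abs_of_nonneg (sig_nonneg ρ r)]
  unfold sig
  split_ifs with h₀ h₁
  · positivity
  · rw [abs_of_pos (not_le.mp h₀), div_le_iff₀ (by linarith)]
    nlinarith
  · rw [abs_of_pos (not_le.mp h₀)]
    linarith

lemma sig_antitone (r : ℝ) : Antitone (fun ρ ↦ sig ρ r) := by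
  intro ρ κ hρκ
  dsimp only
  unfold sig
  split_ifs <;> first
    | linarith
    | (gcongr; linarith)
    | (have : 0 < κ := by linarith
       rw [div_le_iff₀ (by positivity)]; nlinarith)

lemma one_div_mul_sig_le {ρ κ : ℝ} (hρ : 0 < ρ) (hρκ : ρ ≤ κ) (r : ℝ) :
    1 / κ * sig κ r ≤ 1 / ρ * sig ρ r :=
  calc 1 / κ * sig κ r ≤ 1 / ρ * sig κ r := by gcongr; exact sig_nonneg κ r
    _ ≤ 1 / ρ * sig ρ r := by gcongr; exact sig_antitone r hρκ

lemma penalty_sub_mul_posPart_nonpos {ρ κ : ℝ} (hρ : 0 < ρ) (hρκ : ρ ≤ κ) (p q : ℝ) :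
    (1 / κ * sig κ q - 1 / ρ * sig ρ p) * (p - q)⁺ ≤ 0 := by
  rcases le_total p q with hpq | hqp
  · rw [posPart_eq_zero.mpr (sub_nonpos.mpr hpq), mul_zero]
  · refine mul_nonpos_of_nonpos_of_nonneg (sub_nonpos.mpr ?_) (posPart_nonneg _)
    calc 1 / κ * sig κ q ≤ 1 / ρ * sig ρ q := one_div_mul_sig_le hρ hρκ q
      _ ≤ 1 / ρ * sig ρ p := by gcongr; exact sig_monotone ρ hqp

section Lp

variable {α : Type*} [MeasurableSpace α] {μ : Measure α}

lemma MemLp.sig_comp {p : ENNReal} {ρ : ℝ} (hρ : 0 ≤ ρ) {g : α → ℝ} (hg : MemLp g p μ) :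
    MemLp (fun x ↦ sig ρ (g x)) p μ :=
  hg.of_le ((sig_monotone ρ).measurable.comp_aemeasurable hg.aemeasurable).aestronglyMeasurable
    (ae_of_all _ fun x ↦ by simpa only [Real.norm_eq_abs] using abs_sig_le hρ (g x))

lemma integrable_sig_mul {ρ : ℝ} (hρ : 0 ≤ ρ) (g w : Lp ℝ 2 μ) :
    Integrable (fun x ↦ sig ρ (g x) * w x) μ :=
  (MemLp.sig_comp hρ (Lp.memLp g)).integrable_mul (Lp.memLp w)

lemma penalty_sub_integral_nonpos {ρ κ : ℝ} (hρ : 0 < ρ) (hρκ : ρ ≤ κ) (a b c : Lp ℝ 2 μ) :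
    1 / κ * ∫ x, sig κ ((b - c) x) * (a - b)⁺ x ∂μ
      - 1 / ρ * ∫ x, sig ρ ((a - c) x) * (a - b)⁺ x ∂μ ≤ 0 := by
  rw [← integral_const_mul, ← integral_const_mul, ← integral_sub
    ((integrable_sig_mul (hρ.le.trans hρκ) _ _).const_mul _)
    ((integrable_sig_mul hρ.le _ _).const_mul _)]
  refine integral_nonpos_of_ae ?_
  filter_upwards [Lp.coeFn_sub a c, Lp.coeFn_sub b c, Lp.coeFn_sub a b,
    Lp.coeFn_sup (a - b) 0, Lp.coeFn_zero ℝ 2 μ] with x hac hbc hab hsup hzero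
  have hdiff : (a - b) x = (a - c) x - (b - c) x := by
    simp only [Pi.sub_apply] at hac hbc hab
    rw [hab, hac, hbc]; ring
  have hpos : (a - b)⁺ x = ((a - c) x - (b - c) x)⁺ := by
    simp only [Pi.sup_apply, Pi.zero_apply] at hsup hzero
    rw [posPart_def, hsup, hzero, hdiff]; rfl
  rw [hpos, Pi.zero_apply]
  linear_combination penalty_sub_mul_posPart_nonpos hρ hρκ ((a - c) x) ((b - c) x)

end Lp

section Coercive

variable {V : Type*} [NormedAddCommGroup V] [NormedSpace ℝ V] {A : V →L[ℝ] V →L[ℝ] ℝ} {Ca : ℝ}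

lemma eq_zero_of_apply_self_nonpos (hCa : 0 < Ca) (hcoer : ∀ u, Ca * ‖u‖ ^ 2 ≤ A u u) {w : V}
    (hw : A w w ≤ 0) : w = 0 := by
  have hsq : ‖w‖ ^ 2 ≤ 0 := le_of_mul_le_mul_left (by rw [mul_zero]; exact (hcoer w).trans hw) hCa
  exact norm_eq_zero.mp (pow_eq_zero_iff two_ne_zero |>.mp (le_antisymm hsq (sq_nonneg _)))

lemma add_pos_neg_eq_zero_of_apply_nonpos (hCa : 0 < Ca) (hcoer : ∀ u, Ca * ‖u‖ ^ 2 ≤ A u u)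
    {pos : V → V} (hTmono : ∀ u, A (pos u) (pos u - u) ≤ 0) {u : V} (hu : A u (u + pos (-u)) ≤ 0) :
    u + pos (-u) = 0 := by
  have hT : A (pos (-u)) (u + pos (-u)) ≤ 0 := by
    simpa only [sub_neg_eq_add, add_comm] using hTmono (-u)
  refine eq_zero_of_apply_self_nonpos hCa hcoer ?_
  rw [ContinuousLinearMap.map_add₂]
  linarith

end Coercive

theorem stmt_10
    {Ω : Type*} [MeasureSpace Ω]
    {V : Type*} [NormedAddCommGroup V] [InnerProductSpace ℝ V]
    (ι : V →L[ℝ] Lp ℝ 2 (volume : Measure Ω))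
    (pos : V → V) (hpos : ∀ u : V, ι (pos u) = (ι u) ⊔ 0)
    (A : V →L[ℝ] V →L[ℝ] ℝ)
    (Ca : ℝ) (hCa : 0 < Ca)
    (hcoer : ∀ u : V, Ca * ‖u‖ ^ 2 ≤ A u u)
    (hTmono : ∀ u : V, A (pos u) (pos u - u) ≤ 0)
    (ρ κ : ℝ) (hρ : 0 < ρ) (hρκ : ρ ≤ κ)
    (Φ : Lp ℝ 2 (volume : Measure Ω) → V)
    (f : V →L[ℝ] ℝ)
    (φ : Lp ℝ 2 (volume : Measure Ω))
    (uρ uκ : V)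
    (huρ : ∀ w : V, A uρ w + (1 / ρ) * ∫ x, sig ρ ((ι uρ - ι (Φ φ)) x) * (ι w) x = f w)
    (huκ : ∀ w : V, A uκ w + (1 / κ) * ∫ x, sig κ ((ι uκ - ι (Φ φ)) x) * (ι w) x = f w) :
    ι uρ ≤ ι uκ := by
  set w := uρ - uκ + pos (-(uρ - uκ))
  have hιw : ι w = (ι uρ - ι uκ)⁺ := by
    rw [map_add, hpos, map_neg, ← negPart_def, map_sub]
    exact eq_sub_iff_add_eq.mp (posPart_sub_negPart _).symm
  have hpen : A (uρ - uκ) w ≤ 0 := by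
    have hpenalty := penalty_sub_integral_nonpos hρ hρκ (ι uρ) (ι uκ) (ι (Φ φ))
    rw [← hιw] at hpenalty
    rw [ContinuousLinearMap.map_sub₂]
    linarith [huρ w, huκ w]
  have hw : w = 0 := add_pos_neg_eq_zero_of_apply_nonpos hCa hcoer hTmono hpen
  rwa [hw, map_zero, eq_comm, posPart_eq_zero, sub_nonpos] at hιw
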